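/- arXiv:1907.07571 — 3 statements merged into one kernel-verified Lean document; each statement's English description precedes it below -/
import Mathlib

section
/- Let ω be a positive Borel measure on ℝⁿ, let g, h : ℝⁿ → [0,∞] be measurable, and let C > 0 and β = 8C (so that 4C/β = 1/2). Suppose that for every λ > 0 one has ω({x : g(x) > 2λ}) ≤ ω({x : h(x) > βλ}) + (C/β)·ω({x : g(x) > λ}), and suppose that sup_{0<λ≤t} λ² ω({x : g(x) > λ}) < ∞ for every t > 0. Then sup_{λ>0} λ² ω({x : g(x) > λ}) ≤ (8/β²) · sup_{λ>0} λ² ω({x : h(x) > λ}). (Good-λ absorption lemma used in the proof of Theorem 1.) -/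
open MeasureTheory Metric Set

noncomputable section

/-- `ℝⁿ` as a Euclidean space. -/
abbrev Rn (n : ℕ) := EuclideanSpace ℝ (Fin n)

/-- **Good-λ absorption lemma** used in the proof of Theorem 1.  If
`ω({g > 2λ}) ≤ ω({h > βλ}) + (C/β)·ω({g > λ})` for all `λ > 0`, where `β = 8C`, and the
truncated weak `L²(ω)` quasinorms of `g` are finite, then
`sup_{λ>0} λ² ω({g > λ}) ≤ (8/β²) · sup_{λ>0} λ² ω({h > λ})`. -/
theorem good_lambda_absorption
    (n : ℕ) (ω : Measure (Rn n))
    (g h : Rn n → ENNReal) (hg : Measurable g) (hh : Measurable h)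
    (C β : ℝ) (hC : 0 < C) (hβ : β = 8 * C)
    (hgood : ∀ l : ℝ, 0 < l →
      ω {x | ENNReal.ofReal (2 * l) < g x}
        ≤ ω {x | ENNReal.ofReal (β * l) < h x}
          + ENNReal.ofReal (C / β) * ω {x | ENNReal.ofReal l < g x})
    (hfin : ∀ t : ℝ, 0 < t →
      (⨆ (l : ℝ) (_ : 0 < l) (_ : l ≤ t),
        ENNReal.ofReal (l ^ 2) * ω {x | ENNReal.ofReal l < g x}) < ⊤) :
    (⨆ (l : ℝ) (_ : 0 < l), ENNReal.ofReal (l ^ 2) * ω {x | ENNReal.ofReal l < g x})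
      ≤ ENNReal.ofReal (8 / β ^ 2) *
        ⨆ (l : ℝ) (_ : 0 < l), ENNReal.ofReal (l ^ 2) * ω {x | ENNReal.ofReal l < h x} := by
  have hβpos : 0 < β := by rw [hβ]; linarith
  have hCβ : C / β = 1 / 8 := by rw [hβ]; field_simp
  set N := ⨆ (l : ℝ) (_ : 0 < l), ENNReal.ofReal (l ^ 2) * ω {x | ENNReal.ofReal l < h x}
    with hNdef
  set F : ℝ → ENNReal := fun l => ENNReal.ofReal (l ^ 2) * ω {x | ENNReal.ofReal l < g x}
    with hFdef
  have half : ENNReal.ofReal (1/2) = 1/2 := by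
    rw [ENNReal.ofReal_div_of_pos (by norm_num)]; norm_num
  -- key inequality : F l ≤ (4/β²) N + F(l/2)/2
  have key : ∀ l : ℝ, 0 < l → F l ≤ ENNReal.ofReal (4 / β ^ 2) * N + F (l/2) / 2 := by
    intro l hl
    have h2 := hgood (l/2) (by linarith)
    have e1 : 2 * (l/2) = l := by ring
    rw [e1] at h2
    have step1 : F l ≤ ENNReal.ofReal (l ^ 2) * ω {x | ENNReal.ofReal (β * (l/2)) < h x}
        + ENNReal.ofReal (l ^ 2) * (ENNReal.ofReal (C / β)
            * ω {x | ENNReal.ofReal (l/2) < g x}) := by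
      rw [hFdef]
      calc ENNReal.ofReal (l ^ 2) * ω {x | ENNReal.ofReal l < g x}
          ≤ ENNReal.ofReal (l ^ 2) * (ω {x | ENNReal.ofReal (β * (l/2)) < h x}
              + ENNReal.ofReal (C / β) * ω {x | ENNReal.ofReal (l/2) < g x}) :=
            mul_le_mul_right h2 _
        _ = _ := by rw [mul_add]
    refine step1.trans (add_le_add ?_ ?_)
    · -- first term
      have e2 : ENNReal.ofReal (l ^ 2)
          = ENNReal.ofReal (4 / β ^ 2) * ENNReal.ofReal ((β * (l/2)) ^ 2) := by
        rw [← ENNReal.ofReal_mul (by positivity)]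
        congr 1
        field_simp
        ring
      rw [e2, mul_assoc]
      refine mul_le_mul_right ?_ _
      exact le_iSup₂ (f := fun (l : ℝ) (_ : 0 < l) =>
        ENNReal.ofReal (l ^ 2) * ω {x | ENNReal.ofReal l < h x}) (β * (l/2)) (by positivity)
    · -- second term
      have e3 : ENNReal.ofReal (l ^ 2) * ENNReal.ofReal (C / β)
          = ENNReal.ofReal ((l/2) ^ 2) * ENNReal.ofReal (1/2) := by
        rw [← ENNReal.ofReal_mul (by positivity), ← ENNReal.ofReal_mul (by positivity), hCβ]
        congr 1; ring
      rw [← mul_assoc, e3, half, hFdef]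
      simp only [ENNReal.div_eq_inv_mul, one_div]
      ring_nf
      exact le_rfl
  -- truncated sup
  set S : ℝ → ENNReal := fun t => ⨆ (l : ℝ) (_ : 0 < l) (_ : l ≤ t), F l with hSdef
  have hSt : ∀ t : ℝ, 0 < t → S t ≤ ENNReal.ofReal (4 / β ^ 2) * N + S t / 2 := by
    intro t ht
    refine iSup₂_le fun l hl => iSup_le fun hlt => ?_
    refine (key l hl).trans (add_le_add_right ?_ _)
    gcongr
    exact le_iSup₂_of_le (l/2) (by linarith)
      (le_iSup_of_le (by linarith : l/2 ≤ t) le_rfl)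
  have habs : ∀ t : ℝ, 0 < t → S t ≤ ENNReal.ofReal (8 / β ^ 2) * N := by
    intro t ht
    have hfin' : S t ≠ ⊤ := (hfin t ht).ne
    have h2 : S t / 2 + S t / 2 ≤ ENNReal.ofReal (4 / β ^ 2) * N + S t / 2 := by
      rw [ENNReal.add_halves]; exact hSt t ht
    have hhalf_ne : S t / 2 ≠ ⊤ := by
      simp [ENNReal.div_eq_top, hfin']
    have h3 : S t / 2 ≤ ENNReal.ofReal (4 / β ^ 2) * N :=
      (ENNReal.add_le_add_iff_right hhalf_ne).mp h2
    calc S t = S t / 2 + S t / 2 := (ENNReal.add_halves _).symm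
      _ ≤ ENNReal.ofReal (4 / β ^ 2) * N + ENNReal.ofReal (4 / β ^ 2) * N :=
          add_le_add h3 h3
      _ = (ENNReal.ofReal (4 / β ^ 2) + ENNReal.ofReal (4 / β ^ 2)) * N := by
          rw [add_mul]
      _ = ENNReal.ofReal (8 / β ^ 2) * N := by
          rw [← ENNReal.ofReal_add (by positivity) (by positivity)]
          congr 1; ring
  refine iSup₂_le fun l hl => ?_
  refine le_trans ?_ (habs l hl)
  exact le_iSup₂_of_le l hl (le_iSup_of_le le_rfl le_rfl)
end
end

section
/- Let σ and ω be locally finite positive Borel measures on ℝⁿ with A₂^0(σ,ω) < ∞, and let K : ℝⁿ×ℝⁿ → ℝ be measurable with |K(x,y)| ≤ C_CZ |x−y|^{−n} for x ≠ y. Let r ≥ 1, σ(B(0,r)) > 0, and let f be measurable with |f| ≤ 1 and f supported in B(0,r). Then for every t > 0, sup_{0<λ≤t} λ² ω({x ∈ ℝⁿ : T_♭(fσ)(x) > λ}) < ∞, where T_♭(fσ)(x) = sup_{0<ε<R<∞} |∫_{{y : ε<|x−y|<R}} K(x,y) f(y) dσ(y)|. (A priori finiteness claim in the proof of Theorem 1.)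 -/
open MeasureTheory Metric Set

noncomputable section

/-- The axis-parallel cube with center `c` and half side length `r`. -/
def cube {n : ℕ} (c : Rn n) (r : ℝ) : Set (Rn n) := {x | ∀ i, |x i - c i| ≤ r}

/-- The annulus `ε < |x - y| < R` around `x`. -/
def annulus {n : ℕ} (x : Rn n) (ε R : ℝ) : Set (Rn n) := {y | ε < dist x y ∧ dist x y < R}

/-- The fractional Muckenhoupt condition `A₂^α(σ,ω) ≤ A`:
`σ(Q)·ω(Q) ≤ A·|Q|^{2(1-α/n)}` for all axis-parallel cubes `Q` (side length `2r`). -/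
def A2Le {n : ℕ} (α : ℝ) (σ ω : Measure (Rn n)) (A : ℝ) : Prop :=
  ∀ (c : Rn n) (r : ℝ), 0 < r →
    σ (cube c r) * ω (cube c r) ≤ ENNReal.ofReal (A * (2 * r) ^ (2 * ((n : ℝ) - α)))

/-- The maximal truncation operator `T_♭(fσ)` (valued in `[0,∞]`). -/
def maxTrunc {n : ℕ} (K : Rn n → Rn n → ℝ) (σ : Measure (Rn n)) (f : Rn n → ℝ)
    (x : Rn n) : ENNReal :=
  ⨆ (ε : ℝ) (R : ℝ) (_ : 0 < ε) (_ : ε < R),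
    ENNReal.ofReal |∫ y in annulus x ε R, K x y * f y ∂σ|

lemma coord_le_norm {n : ℕ} (x : Rn n) (i : Fin n) : |x i| ≤ ‖x‖ := by
  rw [EuclideanSpace.norm_eq]
  calc |x i| = Real.sqrt (‖x i‖ ^ 2) := by
        rw [Real.norm_eq_abs, Real.sqrt_sq_eq_abs, abs_abs]
    _ ≤ _ := Real.sqrt_le_sqrt (Finset.single_le_sum (fun j _ => sq_nonneg ‖x j‖) (Finset.mem_univ i))

lemma far_bound {n : ℕ} (σ : Measure (Rn n))
    (K : Rn n → Rn n → ℝ) (Ccz : ℝ) (hCcz : 0 < Ccz)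
    (hKsize : ∀ x y : Rn n, x ≠ y → |K x y| ≤ Ccz * ‖x - y‖ ^ (-(n : ℝ)))
    (r : ℝ) (hr : 1 ≤ r)
    (f : Rn n → ℝ) (hf1 : ∀ y, |f y| ≤ 1)
    (hsupp : Function.support f ⊆ ball (0 : Rn n) r)
    (hSfin : σ (ball (0:Rn n) r) ≠ ⊤)
    (x : Rn n) (hx : 2*r ≤ ‖x‖) :
    maxTrunc K σ f x
      ≤ ENNReal.ofReal (Ccz * 2^n * (σ (ball (0:Rn n) r)).toReal * (‖x‖^n)⁻¹) := by
  have hxpos : 0 < ‖x‖ := by linarith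
  set c : ℝ := Ccz * 2^n * (‖x‖^n)⁻¹ with hcdef
  have hc : 0 ≤ c := by positivity
  have hpt : ∀ y, ENNReal.ofReal ‖K x y * f y‖
      ≤ (ball (0:Rn n) r).indicator (fun _ => ENNReal.ofReal c) y := by
    intro y
    by_cases hy : y ∈ ball (0:Rn n) r
    · rw [indicator_of_mem hy]
      apply ENNReal.ofReal_le_ofReal
      have hyr : ‖y‖ < r := by simpa [mem_ball, dist_zero_right] using hy
      have hsub : ‖x‖ - ‖y‖ ≤ ‖x - y‖ := norm_sub_norm_le x y
      have hxy : ‖x‖/2 ≤ ‖x - y‖ := by linarith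
      have hxyp : 0 < ‖x - y‖ := by linarith
      have hne : x ≠ y := by
        intro h; rw [h, sub_self, norm_zero] at hxyp; exact lt_irrefl 0 hxyp
      have hK := hKsize x y hne
      have h2 : ‖x - y‖ ^ (-(n:ℝ)) ≤ (‖x‖/2) ^ (-(n:ℝ)) :=
        Real.rpow_le_rpow_of_nonpos (by linarith) hxy (neg_nonpos.mpr (Nat.cast_nonneg n))
      have h3 : (‖x‖/2) ^ (-(n:ℝ)) = 2^n * (‖x‖^n)⁻¹ := by
        rw [Real.rpow_neg (by positivity), Real.rpow_natCast, div_pow, inv_div, div_eq_mul_inv]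
      calc ‖K x y * f y‖ = |K x y| * |f y| := by rw [norm_mul, Real.norm_eq_abs, Real.norm_eq_abs]
        _ ≤ (Ccz * ‖x - y‖ ^ (-(n:ℝ))) * 1 :=
            mul_le_mul hK (hf1 y) (abs_nonneg _) (by positivity)
        _ = Ccz * ‖x - y‖ ^ (-(n:ℝ)) := mul_one _
        _ ≤ Ccz * ((‖x‖/2) ^ (-(n:ℝ))) := mul_le_mul_of_nonneg_left h2 hCcz.le
        _ = c := by rw [h3, hcdef]; ring
    · rw [indicator_of_notMem hy]
      have hfy : f y = 0 := Function.notMem_support.mp (fun h => hy (hsupp h))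
      simp [hfy]
  refine iSup_le fun ε => iSup_le fun R => iSup_le fun hε => iSup_le fun hεR => ?_
  have hlin : ∫⁻ y in annulus x ε R, ENNReal.ofReal ‖K x y * f y‖ ∂σ
      ≤ ENNReal.ofReal c * σ (ball (0:Rn n) r) := by
    refine le_trans (setLIntegral_le_lintegral _ _) ?_
    refine le_trans (lintegral_mono hpt) ?_
    rw [lintegral_indicator measurableSet_ball, setLIntegral_const]
  have hint : |∫ y in annulus x ε R, K x y * f y ∂σ|
      ≤ c * (σ (ball (0:Rn n) r)).toReal := by
    rw [← Real.norm_eq_abs]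
    refine (norm_integral_le_lintegral_norm _).trans ?_
    refine le_trans (ENNReal.toReal_mono (ENNReal.mul_ne_top ENNReal.ofReal_ne_top hSfin) hlin) ?_
    rw [ENNReal.toReal_mul, ENNReal.toReal_ofReal hc]
  exact ENNReal.ofReal_le_ofReal (le_trans hint (le_of_eq (by rw [hcdef]; ring)))

/-- **A priori finiteness claim** in the proof of Theorem 1.  If `A₂^0(σ,ω) < ∞`,
`|K(x,y)| ≤ C_CZ |x−y|^{−n}`, `|f| ≤ 1` is supported in `B(0,r)` with `r ≥ 1` and
`σ(B(0,r)) > 0`, then `sup_{0<λ≤t} λ² ω({T_♭(fσ) > λ}) < ∞` for every `t > 0`. -/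
theorem a_priori_finiteness
    (n : ℕ) (hn : 1 ≤ n)
    (σ ω : Measure (Rn n)) [IsLocallyFiniteMeasure σ] [IsLocallyFiniteMeasure ω]
    (A : ℝ) (hA : A2Le 0 σ ω A)
    (K : Rn n → Rn n → ℝ) (Ccz : ℝ) (hCcz : 0 < Ccz)
    (hKmeas : Measurable (fun p : Rn n × Rn n => K p.1 p.2))
    (hKsize : ∀ x y : Rn n, x ≠ y → |K x y| ≤ Ccz * ‖x - y‖ ^ (-(n : ℝ)))
    (r : ℝ) (hr : 1 ≤ r) (hσr : 0 < σ (ball (0 : Rn n) r))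
    (f : Rn n → ℝ) (hf : Measurable f) (hf1 : ∀ y, |f y| ≤ 1)
    (hsupp : Function.support f ⊆ ball (0 : Rn n) r) :
    ∀ t : ℝ, 0 < t →
      (⨆ (l : ℝ) (_ : 0 < l) (_ : l ≤ t),
        ENNReal.ofReal (l ^ 2) * ω {x | ENNReal.ofReal l < maxTrunc K σ f x}) < ⊤ := by
  intro t ht
  have hn' : (n:ℝ) ≠ 0 := Nat.cast_ne_zero.mpr (by omega)
  have hSfin : σ (ball (0 : Rn n) r) ≠ ⊤ := by
    refine ne_top_of_le_ne_top ((isCompact_closedBall (0:Rn n) r).measure_lt_top).ne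
      (measure_mono ball_subset_closedBall)
  have hSr : 0 < (σ (ball (0 : Rn n) r)).toReal := ENNReal.toReal_pos hσr.ne' hSfin
  set Sr := (σ (ball (0 : Rn n) r)).toReal with hSrdef
  set C' := Ccz * 2^n * Sr with hC'def
  have hC'pos : 0 < C' := by positivity
  set M := |A| * 4^n * (t^2*(2*r)^(2*n) + C'^2) with hMdef
  have key : ∀ l : ℝ, 0 < l → l ≤ t →
      ENNReal.ofReal (l ^ 2) * ω {x | ENNReal.ofReal l < maxTrunc K σ f x}
        ≤ ENNReal.ofReal M / σ (ball (0 : Rn n) r) := by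
    intro l hl hlt
    set q := (C'/l) ^ ((n:ℝ)⁻¹) with hqdef
    have hql : 0 < C'/l := div_pos hC'pos hl
    have hq0 : 0 < q := Real.rpow_pos_of_pos hql _
    have hqn : q ^ n = C'/l := by
      rw [hqdef, ← Real.rpow_natCast ((C'/l)^((n:ℝ)⁻¹)) n, ← Real.rpow_mul hql.le,
        inv_mul_cancel₀ hn', Real.rpow_one]
    set R := max (2*r) q with hRdef
    have hR2r : 2*r ≤ R := le_max_left _ _
    have hRq : q ≤ R := le_max_right _ _
    have hRpos : 0 < R := lt_of_lt_of_le (by linarith) hR2r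
    have hsub : {x | ENNReal.ofReal l < maxTrunc K σ f x} ⊆ cube 0 R := by
      intro x hx
      simp only [mem_setOf_eq] at hx
      have hnorm : ‖x‖ ≤ R := by
        by_cases hx2 : ‖x‖ < 2*r
        · linarith
        · push_neg at hx2
          have hxpos : 0 < ‖x‖ := by linarith
          have hb := lt_of_lt_of_le hx
            (far_bound σ K Ccz hCcz hKsize r hr f hf1 hsupp hSfin x hx2)
          have hlr : l < C' * (‖x‖^n)⁻¹ :=
            (ENNReal.ofReal_lt_ofReal_iff_of_nonneg hl.le).mp hb
          have hxn : ‖x‖^n < C'/l := by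
            rw [lt_div_iff₀ hl]
            have h := mul_lt_mul_of_pos_right hlr (pow_pos hxpos n)
            rw [mul_assoc, inv_mul_cancel₀ (pow_pos hxpos n).ne', mul_one] at h
            linarith
          have hxq : ‖x‖ < q := by
            have hlt' : ‖x‖^n < q^n := by rw [hqn]; exact hxn
            exact lt_of_pow_lt_pow_left₀ n hq0.le hlt'
          linarith
      intro i
      have h0 : (0 : Rn n) i = 0 := rfl
      rw [h0, sub_zero]
      exact le_trans (coord_le_norm x i) hnorm
    have hballsub : ball (0:Rn n) r ⊆ cube 0 R := by
      intro y hy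
      have hyr : ‖y‖ < r := by simpa [mem_ball, dist_zero_right] using hy
      intro i
      have h0 : (0 : Rn n) i = 0 := rfl
      rw [h0, sub_zero]
      exact le_trans (coord_le_norm y i) (by linarith)
    have hσcube : σ (ball (0:Rn n) r) ≤ σ (cube 0 R) := measure_mono hballsub
    have hA2 := hA 0 R hRpos
    have hωle : ω (cube 0 R)
        ≤ ENNReal.ofReal (A * (2*R)^(2*((n:ℝ)-0))) / σ (ball (0:Rn n) r) := by
      rw [ENNReal.le_div_iff_mul_le (Or.inl hσr.ne') (Or.inl hSfin)]
      calc ω (cube 0 R) * σ (ball (0:Rn n) r)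
          ≤ ω (cube 0 R) * σ (cube 0 R) := mul_le_mul_right hσcube _
        _ = σ (cube 0 R) * ω (cube 0 R) := mul_comm _ _
        _ ≤ _ := hA2
    have hreal : l^2 * (A * (2*R)^(2*((n:ℝ)-0))) ≤ M := by
      have hrp : (2*R) ^ (2*((n:ℝ)-0)) = (2*R)^(2*n) := by
        rw [show (2*((n:ℝ)-0)) = ((2*n : ℕ) : ℝ) by push_cast; ring, Real.rpow_natCast]
      rw [hrp]
      have h2R : (2*R)^(2*n) = 4^n * R^(2*n) := by
        rw [mul_pow, show (2:ℝ)^(2*n) = 4^n by rw [pow_mul]; norm_num]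
      have hRbound : R^(2*n) ≤ (2*r)^(2*n) + (C'/l)^2 := by
        rcases max_cases (2*r) q with ⟨hmax, _⟩ | ⟨hmax, _⟩
        · rw [hRdef, hmax]
          exact le_add_of_nonneg_right (by positivity)
        · rw [hRdef, hmax, show q^(2*n) = (q^n)^2 by rw [← pow_mul, mul_comm], hqn]
          exact le_add_of_nonneg_left (by positivity)
      have h1 : A * (2*R)^(2*n) ≤ |A| * (4^n * ((2*r)^(2*n) + (C'/l)^2)) := by
        calc A * (2*R)^(2*n) ≤ |A| * (2*R)^(2*n) :=
              mul_le_mul_of_nonneg_right (le_abs_self A) (by positivity)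
          _ = |A| * (4^n * R^(2*n)) := by rw [h2R]
          _ ≤ _ := mul_le_mul_of_nonneg_left
              (mul_le_mul_of_nonneg_left hRbound (by positivity)) (abs_nonneg A)
      have h2 : l^2 * (|A| * (4^n*((2*r)^(2*n) + (C'/l)^2))) ≤ M := by
        rw [hMdef]
        have heq : l^2 * (|A| * (4^n*((2*r)^(2*n) + (C'/l)^2)))
            = |A| * 4^n * (l^2 * (2*r)^(2*n) + C'^2) := by
          field_simp
        rw [heq]
        apply mul_le_mul_of_nonneg_left _ (by positivity)
        have hl2 : l^2 ≤ t^2 := by nlinarith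
        nlinarith [pow_nonneg (by linarith : (0:ℝ) ≤ 2*r) (2*n)]
      calc l^2 * (A*(2*R)^(2*n)) ≤ l^2 * (|A| * (4^n*((2*r)^(2*n)+(C'/l)^2))) :=
            mul_le_mul_of_nonneg_left h1 (sq_nonneg l)
        _ ≤ M := h2
    calc ENNReal.ofReal (l^2) * ω {x | ENNReal.ofReal l < maxTrunc K σ f x}
        ≤ ENNReal.ofReal (l^2) * ω (cube 0 R) := mul_le_mul_right (measure_mono hsub) _
      _ ≤ ENNReal.ofReal (l^2) * (ENNReal.ofReal (A * (2*R)^(2*((n:ℝ)-0)))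
            / σ (ball (0:Rn n) r)) := mul_le_mul_right hωle _
      _ = ENNReal.ofReal (l^2) * ENNReal.ofReal (A * (2*R)^(2*((n:ℝ)-0)))
            / σ (ball (0:Rn n) r) := (mul_div_assoc _ _ _).symm
      _ = ENNReal.ofReal (l^2 * (A * (2*R)^(2*((n:ℝ)-0)))) / σ (ball (0:Rn n) r) := by
          rw [ENNReal.ofReal_mul (sq_nonneg l)]
      _ ≤ ENNReal.ofReal M / σ (ball (0:Rn n) r) :=
          ENNReal.div_le_div_right (ENNReal.ofReal_le_ofReal hreal) _
  refine lt_of_le_of_lt (iSup_le fun l => iSup_le fun hl => iSup_le fun hlt => key l hl hlt) ?_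
  exact ENNReal.div_lt_top ENNReal.ofReal_ne_top hσr.ne'
end
end

section
/- Let 0 ≤ α < n and let σ and ω be locally finite positive Borel measures on ℝⁿ with A₂^α(σ,ω) = A < ∞. Then there is a constant C depending only on n and α such that for every f ∈ L²(σ) and every λ > 0, λ² ω({x ∈ ℝⁿ : M^α(fσ)(x) > λ}) ≤ C · A · ‖f‖²_{L²(σ)}, where M^α(fσ)(x) = sup over axis-parallel cubes Q containing x of |Q|^{α/n − 1} ∫_Q |f| dσ. (Weak type (2,2) bound for the fractional maximal operator, used in the proof of Theorem 1.) -/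
open MeasureTheory Metric Set
open scoped ENNReal NNReal

noncomputable section

/-- The `α`-fractional Hardy–Littlewood maximal operator
`M^α(fσ)(x) = sup_{Q ∋ x} |Q|^{α/n-1} ∫_Q |f| dσ` (valued in `[0,∞]`). -/
def fracMax {n : ℕ} (α : ℝ) (σ : Measure (Rn n)) (f : Rn n → ℝ) (x : Rn n) : ENNReal :=
  ⨆ (c : Rn n) (r : ℝ) (_ : 0 < r) (_ : x ∈ cube c r),
    ENNReal.ofReal ((2 * r) ^ (α - n)) * ∫⁻ y in cube c r, ENNReal.ofReal |f y| ∂σ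

namespace FracMaxAux

variable {n : ℕ}

lemma isClosed_cube (c : Rn n) (r : ℝ) : IsClosed (cube c r) := by
  have : cube c r = ⋂ i, (fun x : Rn n => |x i - c i|) ⁻¹' Iic r := by
    ext x; simp [cube]
  rw [this]
  refine isClosed_iInter fun i => IsClosed.preimage ?_ isClosed_Iic
  exact ((EuclideanSpace.proj i).continuous.sub continuous_const).abs

lemma measurableSet_cube (c : Rn n) (r : ℝ) : MeasurableSet (cube c r) :=
  (isClosed_cube c r).measurableSet

lemma mem_cube_self (c : Rn n) {r : ℝ} (hr : 0 ≤ r) : c ∈ cube c r := fun i => by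
  simpa using hr

lemma cube_mono (c : Rn n) {r r' : ℝ} (h : r ≤ r') : cube c r ⊆ cube c r' :=
  fun _ hx i => (hx i).trans h

lemma cube_subset_enlarge {c₁ c₂ : Rn n} {r₁ r₂ : ℝ}
    (h : (cube c₁ r₁ ∩ cube c₂ r₂).Nonempty) (hr : r₁ ≤ 4 * r₂) :
    cube c₁ r₁ ⊆ cube c₂ (9 * r₂) := by
  obtain ⟨z, hz₁, hz₂⟩ := h
  intro x hx i
  have h0 := hx i
  have h1 := hz₁ i
  have h2 := hz₂ i
  have e : x i - c₂ i = (x i - c₁ i) + (z i - c₂ i) - (z i - c₁ i) := by ring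
  rw [e]
  have := abs_sub (x i - c₁ i + (z i - c₂ i)) (z i - c₁ i)
  have habs : |x i - c₁ i + (z i - c₂ i)| ≤ |x i - c₁ i| + |z i - c₂ i| := abs_add_le _ _
  have : |x i - c₁ i + (z i - c₂ i) - (z i - c₁ i)| ≤
      |x i - c₁ i + (z i - c₂ i)| + |z i - c₁ i| := abs_sub _ _
  linarith

/-- Cauchy–Schwarz for the lower Lebesgue integral. -/
lemma cs {μ : Measure (Rn n)} {g : Rn n → ℝ≥0∞} (s : Set (Rn n))
    (hg : AEMeasurable g (μ.restrict s)) :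
    (∫⁻ y in s, g y ∂μ) ^ 2 ≤ μ s * ∫⁻ y in s, g y ^ 2 ∂μ := by
  have hpq : Real.HolderConjugate 2 2 := Real.HolderConjugate.two_two
  have h := ENNReal.lintegral_mul_le_Lp_mul_Lq (μ.restrict s) hpq hg
    (aemeasurable_const (b := (1 : ℝ≥0∞)))
  simp only [Pi.mul_apply, mul_one, ENNReal.one_rpow, lintegral_one,
    Measure.restrict_apply_univ] at h
  have h2 : ∀ x : ℝ≥0∞, x ^ (2 : ℝ) = x ^ (2 : ℕ) := fun x => by
    rw [← ENNReal.rpow_natCast]; norm_num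
  calc (∫⁻ y in s, g y ∂μ) ^ 2
      ≤ ((∫⁻ y in s, g y ^ (2 : ℝ) ∂μ) ^ (1 / (2:ℝ)) * μ s ^ (1 / (2:ℝ))) ^ 2 := by
        gcongr
    _ = (∫⁻ y in s, g y ^ (2 : ℝ) ∂μ) * μ s := by
        rw [mul_pow, ← ENNReal.rpow_natCast ((∫⁻ y in s, g y ^ (2:ℝ) ∂μ) ^ (1/(2:ℝ))) 2,
          ← ENNReal.rpow_natCast (μ s ^ (1/(2:ℝ))) 2, ← ENNReal.rpow_mul, ← ENNReal.rpow_mul]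
        norm_num
    _ = μ s * ∫⁻ y in s, g y ^ 2 ∂μ := by
        rw [mul_comm]
        congr 1
        exact lintegral_congr fun y => by rw [h2]

/-- The key per-cube estimate. -/
lemma key_estimate {σ ω : Measure (Rn n)} {α A : ℝ} (hA : A2Le α σ ω A)
    {g : Rn n → ℝ≥0∞} (hg : AEMeasurable g σ) {l : ℝ} (hl : 0 < l) {c : Rn n} {r : ℝ}
    (hr : 0 < r)
    (hlt : ENNReal.ofReal l <
      ENNReal.ofReal ((2 * r) ^ (α - (n:ℝ))) * ∫⁻ y in cube c r, g y ∂σ) :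
    ENNReal.ofReal (l ^ 2) * ω (cube c (9 * r)) ≤
      ENNReal.ofReal ((9:ℝ) ^ (2 * ((n:ℝ) - α)) * A) * ∫⁻ y in cube c r, g y ^ 2 ∂σ := by
  set Q := cube c r with hQ
  set Q9 := cube c (9 * r) with hQ9
  set I := ∫⁻ y in Q, g y ∂σ with hI
  set J := ∫⁻ y in Q, g y ^ 2 ∂σ with hJ
  have h2r : (0:ℝ) < 2 * r := by linarith
  have hb0 : (0:ℝ) ≤ (2 * r) ^ (α - (n:ℝ)) := Real.rpow_nonneg h2r.le _
  have hsq : ENNReal.ofReal (l ^ 2) ≤ ENNReal.ofReal ((2*r) ^ (α - (n:ℝ))) ^ 2 * I ^ 2 := by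
    calc ENNReal.ofReal (l ^ 2) = (ENNReal.ofReal l) ^ 2 := ENNReal.ofReal_pow hl.le 2
      _ ≤ (ENNReal.ofReal ((2*r) ^ (α - (n:ℝ))) * I) ^ 2 := by gcongr
      _ = _ := mul_pow _ _ _
  have hCS : I ^ 2 ≤ σ Q * J := cs Q hg.restrict
  have hσ : σ Q ≤ σ Q9 := measure_mono (cube_mono c (by linarith))
  have hA9 := hA c (9 * r) (by linarith)
  calc ENNReal.ofReal (l ^ 2) * ω Q9
      ≤ (ENNReal.ofReal ((2*r) ^ (α - (n:ℝ))) ^ 2 * (σ Q9 * J)) * ω Q9 := by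
        refine mul_le_mul' (hsq.trans ?_) le_rfl
        exact mul_le_mul' le_rfl (hCS.trans (mul_le_mul' hσ le_rfl))
    _ = ENNReal.ofReal ((2*r) ^ (α - (n:ℝ))) ^ 2 * (σ Q9 * ω Q9) * J := by ring
    _ ≤ ENNReal.ofReal ((2*r) ^ (α - (n:ℝ))) ^ 2 *
          ENNReal.ofReal (A * (2 * (9 * r)) ^ (2 * ((n:ℝ) - α))) * J := by
        gcongr
    _ = ENNReal.ofReal (((2*r) ^ (α - (n:ℝ))) ^ 2 *
          (A * (2 * (9 * r)) ^ (2 * ((n:ℝ) - α)))) * J := by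
        rw [← ENNReal.ofReal_pow hb0, ← ENNReal.ofReal_mul (by positivity)]
    _ = ENNReal.ofReal ((9:ℝ) ^ (2 * ((n:ℝ) - α)) * A) * J := by
        congr 2
        have e1 : ((2*r) ^ (α - (n:ℝ))) ^ 2 = (2*r) ^ ((α - (n:ℝ)) * 2) := by
          rw [← Real.rpow_natCast ((2*r) ^ (α - (n:ℝ))) 2, ← Real.rpow_mul h2r.le]
          norm_num
        have e2 : (2 * (9 * r)) = (9:ℝ) * (2 * r) := by ring
        have e3 : ((9:ℝ) * (2 * r)) ^ (2 * ((n:ℝ) - α)) =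
            (9:ℝ) ^ (2 * ((n:ℝ) - α)) * (2 * r) ^ (2 * ((n:ℝ) - α)) :=
          Real.mul_rpow (by norm_num) h2r.le
        have e4 : (2*r) ^ ((α - (n:ℝ)) * 2) * (2*r) ^ (2 * ((n:ℝ) - α)) = 1 := by
          rw [← Real.rpow_add h2r, show (α - (n:ℝ)) * 2 + 2 * ((n:ℝ) - α) = 0 by ring,
            Real.rpow_zero]
        rw [e1, e2, e3,
          show (2*r) ^ ((α - (n:ℝ)) * 2) *
              (A * ((9:ℝ) ^ (2 * ((n:ℝ) - α)) * (2 * r) ^ (2 * ((n:ℝ) - α)))) =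
            ((2*r) ^ ((α - (n:ℝ)) * 2) * (2*r) ^ (2 * ((n:ℝ) - α))) *
              ((9:ℝ) ^ (2 * ((n:ℝ) - α)) * A) by ring, e4, one_mul]

end FracMaxAux

open FracMaxAux

/-- **Weak type `(2,2)` bound for the fractional maximal operator**, used in the proof
of Theorem 1: if `A₂^α(σ,ω) ≤ A` then
`λ² ω({M^α(fσ) > λ}) ≤ C·A·‖f‖²_{L²(σ)}` with `C = C(n,α)`. -/
theorem fracMax_weak_type
    (n : ℕ) (hn : 1 ≤ n) (α : ℝ) (hα : 0 ≤ α) (hαn : α < n)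
    (σ ω : Measure (Rn n)) [IsLocallyFiniteMeasure σ] [IsLocallyFiniteMeasure ω]
    (A : ℝ) (hA0 : 0 ≤ A) (hA : A2Le α σ ω A) :
    ∃ C : ℝ, 0 < C ∧ ∀ f : Rn n → ℝ, MemLp f 2 σ → ∀ l : ℝ, 0 < l →
      ENNReal.ofReal (l ^ 2) * ω {x | ENNReal.ofReal l < fracMax α σ f x}
        ≤ ENNReal.ofReal (C * A) * (eLpNorm f 2 σ) ^ 2 := by
  refine ⟨(9:ℝ) ^ (2 * ((n:ℝ) - α)), Real.rpow_pos_of_pos (by norm_num) _, ?_⟩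
  intro f hf l hl
  set g : Rn n → ℝ≥0∞ := fun y => ENNReal.ofReal |f y| with hg_def
  have hg : AEMeasurable g σ :=
    (ENNReal.measurable_ofReal.comp measurable_abs).comp_aemeasurable hf.aestronglyMeasurable.aemeasurable
  -- total integral of `g²` is `‖f‖₂²`
  have hsnorm : ∫⁻ y, g y ^ 2 ∂σ = (eLpNorm f 2 σ) ^ 2 := by
    rw [eLpNorm_eq_lintegral_rpow_enorm_toReal (by norm_num) (by norm_num)]
    have hpt : ∀ x, (‖f x‖ₑ) ^ ((2:ℝ≥0∞).toReal) = g x ^ 2 := fun x => by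
      rw [hg_def]
      simp only [← Real.norm_eq_abs, ofReal_norm]
      rw [ENNReal.toReal_ofNat, ← ENNReal.rpow_natCast (‖f x‖ₑ) 2]
      norm_num
    simp_rw [hpt]
    rw [← ENNReal.rpow_natCast ((∫⁻ y, g y ^ 2 ∂σ) ^ (1 / (2:ℝ≥0∞).toReal)) 2,
      ← ENNReal.rpow_mul]
    norm_num
  -- the truncated superlevel sets
  set Em : ℕ → Set (Rn n) := fun m => {x | ∃ c : Rn n, ∃ r : ℝ, 0 < r ∧ r ≤ (m:ℝ) ∧
    x ∈ cube c r ∧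
    ENNReal.ofReal l < ENNReal.ofReal ((2 * r) ^ (α - (n:ℝ))) * ∫⁻ y in cube c r, g y ∂σ}
    with hEm_def
  have hmono : Monotone Em := by
    intro m m' hmm x hx
    obtain ⟨c, r, h1, h2, h3, h4⟩ := hx
    exact ⟨c, r, h1, h2.trans (by exact_mod_cast hmm), h3, h4⟩
  have hsub : {x | ENNReal.ofReal l < fracMax α σ f x} ⊆ ⋃ m, Em m := by
    intro x hx
    simp only [fracMax, lt_iSup_iff, mem_setOf_eq] at hx
    obtain ⟨c, r, hr, hxc, hlt⟩ := hx
    obtain ⟨m, hm⟩ := exists_nat_ge r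
    exact mem_iUnion.mpr ⟨m, c, r, hr, hm, hxc, hlt⟩
  have hmeas : ω {x | ENNReal.ofReal l < fracMax α σ f x} ≤ ⨆ m, ω (Em m) :=
    (measure_mono hsub).trans (hmono.directed_le.measure_iUnion).le
  -- the bound for each truncation
  have hbound : ∀ m : ℕ, ENNReal.ofReal (l ^ 2) * ω (Em m) ≤
      ENNReal.ofReal ((9:ℝ) ^ (2 * ((n:ℝ) - α)) * A) * ∫⁻ y, g y ^ 2 ∂σ := by
    intro m
    have hch : ∀ x ∈ Em m, ∃ c : Rn n, ∃ r : ℝ, 0 < r ∧ r ≤ (m:ℝ) ∧ x ∈ cube c r ∧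
        ENNReal.ofReal l < ENNReal.ofReal ((2 * r) ^ (α - (n:ℝ))) *
          ∫⁻ y in cube c r, g y ∂σ := fun x hx => hx
    choose! cc rr hr hrm hxc hlt using hch
    obtain ⟨u, hut, hdisj, hcov⟩ := Vitali.exists_disjoint_subfamily_covering_enlargement
      (fun x => cube (cc x) (rr x)) (Em m) rr 4 (by norm_num)
      (fun a ha => (hr a ha).le) m (fun a ha => hrm a ha)
      (fun a ha => ⟨cc a, mem_cube_self _ (hr a ha).le⟩)
    have hσpos : ∀ b ∈ u, 0 < σ (cube (cc b) (rr b)) := by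
      intro b hb
      rcases eq_zero_or_pos (σ (cube (cc b) (rr b))) with h0 | h0
      · have := hlt b (hut hb)
        rw [setLIntegral_measure_zero _ _ h0, mul_zero] at this
        exact absurd this (by simp)
      · exact h0
    have hpair : Pairwise (Function.onFun Disjoint fun b : ↥u => cube (cc b.1) (rr b.1)) := by
      intro b1 b2 hne
      exact hdisj b1.2 b2.2 (Subtype.coe_injective.ne hne)
    have hucnt : u.Countable := by
      have hcnt := MeasureTheory.Measure.countable_meas_pos_of_disjoint_iUnion (μ := σ)
        (fun b : ↥u => measurableSet_cube (cc b.1) (rr b.1)) hpair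
      have huniv : {b : ↥u | 0 < σ (cube (cc b.1) (rr b.1))} = Set.univ :=
        eq_univ_of_forall fun b => hσpos b.1 b.2
      rw [huniv] at hcnt
      exact Set.countable_coe_iff.mp (Set.countable_univ_iff.mp hcnt)
    haveI : Countable ↥u := hucnt.to_subtype
    have hcov9 : Em m ⊆ ⋃ b ∈ u, cube (cc b) (9 * rr b) := by
      intro x hx
      obtain ⟨b, hb, hint, hle⟩ := hcov x hx
      exact mem_iUnion₂.mpr ⟨b, hb, cube_subset_enlarge hint hle (hxc x hx)⟩
    have hωle : ω (Em m) ≤ ∑' b : ↥u, ω (cube (cc b.1) (9 * rr b.1)) :=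
      (measure_mono hcov9).trans (measure_biUnion_le ω hucnt _)
    have hper : ∀ b : ↥u, ENNReal.ofReal (l ^ 2) * ω (cube (cc b.1) (9 * rr b.1)) ≤
        ENNReal.ofReal ((9:ℝ) ^ (2 * ((n:ℝ) - α)) * A) *
          ∫⁻ y in cube (cc b.1) (rr b.1), g y ^ 2 ∂σ :=
      fun b => key_estimate hA hg hl (hr b.1 (hut b.2)) (hlt b.1 (hut b.2))
    have hsum : ∑' b : ↥u, ∫⁻ y in cube (cc b.1) (rr b.1), g y ^ 2 ∂σ ≤
        ∫⁻ y, g y ^ 2 ∂σ := by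
      rw [← lintegral_iUnion (fun b : ↥u => measurableSet_cube (cc b.1) (rr b.1)) hpair]
      exact setLIntegral_le_lintegral _ _
    calc ENNReal.ofReal (l ^ 2) * ω (Em m)
        ≤ ENNReal.ofReal (l ^ 2) * ∑' b : ↥u, ω (cube (cc b.1) (9 * rr b.1)) := by gcongr
      _ = ∑' b : ↥u, ENNReal.ofReal (l ^ 2) * ω (cube (cc b.1) (9 * rr b.1)) :=
          ENNReal.tsum_mul_left.symm
      _ ≤ ∑' b : ↥u, ENNReal.ofReal ((9:ℝ) ^ (2 * ((n:ℝ) - α)) * A) *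
            ∫⁻ y in cube (cc b.1) (rr b.1), g y ^ 2 ∂σ := ENNReal.tsum_le_tsum hper
      _ = ENNReal.ofReal ((9:ℝ) ^ (2 * ((n:ℝ) - α)) * A) *
            ∑' b : ↥u, ∫⁻ y in cube (cc b.1) (rr b.1), g y ^ 2 ∂σ := ENNReal.tsum_mul_left
      _ ≤ ENNReal.ofReal ((9:ℝ) ^ (2 * ((n:ℝ) - α)) * A) * ∫⁻ y, g y ^ 2 ∂σ := by gcongr
  calc ENNReal.ofReal (l ^ 2) * ω {x | ENNReal.ofReal l < fracMax α σ f x}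
      ≤ ENNReal.ofReal (l ^ 2) * ⨆ m, ω (Em m) := by gcongr
    _ = ⨆ m, ENNReal.ofReal (l ^ 2) * ω (Em m) := by rw [ENNReal.mul_iSup]
    _ ≤ ENNReal.ofReal ((9:ℝ) ^ (2 * ((n:ℝ) - α)) * A) * ∫⁻ y, g y ^ 2 ∂σ := iSup_le hbound
    _ = ENNReal.ofReal ((9:ℝ) ^ (2 * ((n:ℝ) - α)) * A) * (eLpNorm f 2 σ) ^ 2 := by
        rw [hsnorm]
end
end
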